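/- Let A be a finite set with |A| = q ≥ 2 and let n ≥ 2. For every complete n-universal transformation f : A^m → A^m, the maximal sequential time satisfies st^max_f ≥ n·q^{n·q^n}. -/

import Mathlib

/-- The instruction of `A^m` induced by the `i`-th coordinate function of `f`. -/
def instr {A : Type*} {m : ℕ} (f : (Fin m → A) → Fin m → A) (i : Fin m) :
    (Fin m → A) → Fin m → A :=
  fun x => Function.update x i (f x i)

/-- Apply a list of induced instructions of `f`, first element of the list first. -/
def applyInstrs {A : Type*} {m : ℕ} (f : (Fin m → A) → Fin m → A) :
    List (Fin m) → (Fin m → A) → Fin m → A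
  | [], x => x
  | i :: l, x => applyInstrs f l (instr f i x)

/-- Projection of `A^m` onto the first `n` coordinates. -/
def pr {A : Type*} {m n : ℕ} (hmn : n ≤ m) (x : Fin m → A) : Fin n → A :=
  fun i => x (Fin.castLE hmn i)

/-- `hs` witnesses that `f` sequentially simulates the sequence `gs`: the `k`-th
element of `hs` is a nonempty list of instruction indices expressing `h^(k) ∈ S_f`,
and for each `i` the composition `h^(1) ∘ ⋯ ∘ h^(i)` simulates `g^(i)`. -/
def SeqWitness {A : Type*} {m n : ℕ} (hmn : n ≤ m)
    (f : (Fin m → A) → Fin m → A)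
    (gs : List ((Fin n → A) → Fin n → A))
    (hs : List (List (Fin m))) : Prop :=
  hs.length = gs.length ∧ (∀ l ∈ hs, l ≠ []) ∧
    ∀ (i : ℕ) (hi : i < gs.length) (x : Fin m → A),
      gs.get ⟨i, hi⟩ (pr hmn x) = pr hmn (applyInstrs f ((hs.take (i + 1)).flatten) x)

/-!
A block `h^(i)` has to rewrite every coordinate `j < n` in which the coordinate functions of
`g^(i-1)` and `g^(i)` differ (with `g^(0) = id`), so it uses at least `n` instructions as soon as
they differ in all coordinates. It remains to enumerate `Tran(A^n) ≅ B^n`, `B = A^(A^n)`, so that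
consecutive entries (and the identity and the first entry) differ in every coordinate. With
`B ≅ ZMod M`, `M ≥ 3`, take `k ↦ (d₀, d₁ + k, …, d_{n-1} + k)`, where the `d_j` are the base-`M`
digits of `k`: from `k` to `k + 1` coordinate `0` moves by `1` and every other one by `1` or `2`.
-/

section Instructions

variable {A : Type*} {m : ℕ} (f : (Fin m → A) → Fin m → A)

theorem applyInstrs_append (l₁ l₂ : List (Fin m)) (x : Fin m → A) :
    applyInstrs f (l₁ ++ l₂) x = applyInstrs f l₂ (applyInstrs f l₁ x) := by
  induction l₁ generalizing x with
  | nil => rfl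
  | cons i l ih => exact ih _

theorem applyInstrs_apply_of_notMem {l : List (Fin m)} {j : Fin m} (hj : j ∉ l)
    (x : Fin m → A) : applyInstrs f l x j = x j := by
  induction l generalizing x with
  | nil => rfl
  | cons i l ih =>
    rw [List.mem_cons, not_or] at hj
    rw [applyInstrs, ih hj.2, instr, Function.update_of_ne hj.1]

end Instructions

theorem pr_surjective {A : Type*} [Nonempty A] {m n : ℕ} (hmn : n ≤ m) :
    Function.Surjective (pr hmn : (Fin m → A) → Fin n → A) :=
  (Fin.castLE_injective hmn).surjective_comp_right

def CoordwiseNe {ι β : Type*} (u v : ι → β) : Prop :=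
  ∀ i, u i ≠ v i

namespace SeqWitness

variable {A : Type*} {m n : ℕ} {hmn : n ≤ m} {f : (Fin m → A) → Fin m → A}
  {gs : List ((Fin n → A) → Fin n → A)} {hs : List (List (Fin m))}

theorem length_eq (hw : SeqWitness hmn f gs hs) : hs.length = gs.length := hw.1

theorem pr_applyInstrs_take (hw : SeqWitness hmn f gs hs) {i : ℕ} (hi : i < gs.length + 1)
    (x : Fin m → A) :
    (id :: gs)[i] (pr hmn x) = pr hmn (applyInstrs f (hs.take i).flatten x) := by
  cases i with
  | zero => rfl
  | succ i => exact hw.2.2 i (by omega) x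

theorem castLE_mem (hw : SeqWitness hmn f gs hs) {i : ℕ} (hi : i < gs.length) {j : Fin n}
    (hj : Function.swap ((id :: gs)[i]'(Nat.lt_succ_of_lt hi)) j ≠ Function.swap gs[i] j) :
    Fin.castLE hmn j ∈ hs[i]'(hw.length_eq ▸ hi) := by
  obtain ⟨x, hx⟩ := Function.ne_iff.1 hj
  have : Nonempty A := ⟨x j⟩
  obtain ⟨y, rfl⟩ := pr_surjective hmn x
  by_contra hnotin
  have hblock :
      (hs.take (i + 1)).flatten = (hs.take i).flatten ++ hs[i]'(hw.length_eq ▸ hi) := by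
    rw [List.take_add_one, List.getElem?_eq_getElem, Option.toList_some, List.flatten_append,
      List.flatten_singleton]
  apply hx
  calc _ = pr hmn (applyInstrs f (hs.take i).flatten y) j :=
        congrFun (hw.pr_applyInstrs_take _ y) j
    _ = pr hmn (applyInstrs f (hs.take (i + 1)).flatten y) j := by
      rw [hblock, applyInstrs_append]
      exact (applyInstrs_apply_of_notMem f hnotin _).symm
    _ = gs[i] (pr hmn y) j := congrFun (hw.pr_applyInstrs_take (i := i + 1) (by omega) y).symm j

theorem le_length_getElem (hw : SeqWitness hmn f gs hs) {i : ℕ} (hi : i < gs.length)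
    (hchange : CoordwiseNe (Function.swap ((id :: gs)[i]'(Nat.lt_succ_of_lt hi)))
      (Function.swap gs[i])) :
    n ≤ (hs[i]'(hw.length_eq ▸ hi)).length := by
  have hsub : (List.finRange n).map (Fin.castLE hmn) ⊆ hs[i]'(hw.length_eq ▸ hi) := by
    intro _ hk
    obtain ⟨j, -, rfl⟩ := List.mem_map.1 hk
    exact hw.castLE_mem hi (hchange j)
  simpa using (List.subperm_of_subset
    ((List.nodup_finRange n).map (Fin.castLE_injective hmn)) hsub).length_le

theorem mul_length_le_length_flatten (hw : SeqWitness hmn f gs hs)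
    (hchain : (id :: gs).IsChain fun g g' => CoordwiseNe (Function.swap g) (Function.swap g')) :
    n * gs.length ≤ hs.flatten.length := by
  have hblocks : ∀ k ∈ hs.map List.length, n ≤ k := by
    intro _ hk
    obtain ⟨l, hl, rfl⟩ := List.mem_map.1 hk
    obtain ⟨i, hi, rfl⟩ := List.mem_iff_getElem.1 hl
    exact hw.le_length_getElem (hw.length_eq ▸ hi)
      (hchain.getElem i (by simp [← hw.length_eq, hi]))
  simpa [List.length_flatten, hw.length_eq, mul_comm] using
    List.card_nsmul_le_sum _ n hblocks

end SeqWitness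

section ShearedDigits

variable {M n : ℕ}

def shearedDigits (M n k : ℕ) : Fin n → ZMod M :=
  fun j => ((k / M ^ (j : ℕ) : ℕ) : ZMod M) + if (j : ℕ) = 0 then 0 else (k : ZMod M)

theorem shearedDigits_zero : shearedDigits M n 0 = 0 := by
  ext j
  simp [shearedDigits]

theorem exists_shearedDigits_succ_eq_add (k : ℕ) (j : Fin n) :
    ∃ d : ℕ, 0 < d ∧ d ≤ 2 ∧ shearedDigits M n (k + 1) j = shearedDigits M n k j + d := by
  refine ⟨(if M ^ (j : ℕ) ∣ k + 1 then 1 else 0) + if (j : ℕ) = 0 then 0 else 1, ?_, ?_, ?_⟩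
  · split_ifs with hdvd hj <;> simp_all
  · split_ifs <;> simp
  · simp only [shearedDigits, Nat.succ_div]
    split_ifs <;> push_cast <;> ring

theorem shearedDigits_succ_ne (hM : 3 ≤ M) (k : ℕ) (j : Fin n) :
    shearedDigits M n (k + 1) j ≠ shearedDigits M n k j := by
  obtain ⟨d, hd_pos, hd_le, hd⟩ := exists_shearedDigits_succ_eq_add k j
  rw [hd, Ne, add_eq_left, ZMod.natCast_eq_zero_iff]
  exact Nat.not_dvd_of_pos_of_lt hd_pos (by omega)

theorem shearedDigits_injective :
    Function.Injective fun k : Fin (M ^ n) => shearedDigits M n k := by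
  intro k k' h
  have hdigit :
      ∀ j : Fin n, ((k / M ^ (j : ℕ) : ℕ) : ZMod M) = ((k' / M ^ (j : ℕ) : ℕ) : ZMod M) := by
    intro j
    have hj := congrFun h j
    have h0 := congrFun h ⟨0, j.pos⟩
    simp only [shearedDigits, pow_zero, Nat.div_one, if_true, add_zero] at h0 hj
    split_ifs at hj
    · simpa using hj
    · rw [h0] at hj
      exact add_right_cancel hj
  apply finFunctionFinEquiv.symm.injective
  ext j
  rw [finFunctionFinEquiv_symm_apply_val, finFunctionFinEquiv_symm_apply_val,
    ← ZMod.natCast_eq_natCast_iff']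
  exact hdigit j

end ShearedDigits

theorem ZMod.exists_enumeration_isChain_coordwiseNe {M : ℕ} (hM : 3 ≤ M) (n : ℕ) :
    ∃ l : List (Fin n → ZMod M),
      l.Nodup ∧ (∀ v, v ∈ l) ∧ l.head? = some 0 ∧ l.IsChain CoordwiseNe := by
  have : NeZero M := ⟨by omega⟩
  have hbij := (Fintype.bijective_iff_injective_and_card _).2
    ⟨shearedDigits_injective (M := M) (n := n), by simp⟩
  refine ⟨List.ofFn fun k : Fin (M ^ n) => shearedDigits M n k,
    List.nodup_ofFn.2 shearedDigits_injective, fun v => List.mem_ofFn.2 (hbij.2 v), ?_, ?_⟩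
  · simp [List.head?_eq_getElem?, shearedDigits_zero, Nat.pos_of_neZero]
  · exact List.isChain_iff_getElem.2 fun i _ j => by
      simpa using (shearedDigits_succ_ne hM i j).symm

theorem exists_enumeration_isChain_coordwiseNe {B : Type*} [Fintype B]
    (hB : 3 ≤ Fintype.card B) (c : B) (n : ℕ) :
    ∃ l : List (Fin n → B),
      l.Nodup ∧ (∀ v, v ∈ l) ∧ l.head? = some (fun _ => c) ∧ l.IsChain CoordwiseNe := by
  obtain ⟨l, hnodup, hmem, hhead, hchain⟩ := ZMod.exists_enumeration_isChain_coordwiseNe hB n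
  classical
  have : NeZero (Fintype.card B) := ⟨by omega⟩
  let e₀ : ZMod (Fintype.card B) ≃ B := Fintype.equivOfCardEq (ZMod.card _)
  let e : ZMod (Fintype.card B) ≃ B := e₀.trans (Equiv.swap (e₀ 0) c)
  let E : (Fin n → ZMod (Fintype.card B)) ≃ (Fin n → B) := Equiv.piCongrRight fun _ => e
  refine ⟨l.map E, hnodup.map E.injective, fun v => ?_, ?_, ?_⟩
  · simpa using List.mem_map_of_mem (f := E) (hmem (E.symm v))
  · rw [List.head?_map, hhead, Option.map_some]
    congr 1
    funext _
    exact Equiv.swap_apply_left _ _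
  · exact List.isChain_map_of_isChain E (fun u v h j => e.injective.ne (h j)) hchain

theorem complete_universal_max_seq_time_lower_general (q n m : ℕ) (hq : 2 ≤ q) (hn : 2 ≤ n)
    (hmn : n ≤ m) (A : Type*) [Fintype A] (hA : Fintype.card A = q)
    (f : (Fin m → A) → Fin m → A) :
    ∃ gs : List ((Fin n → A) → Fin n → A), gs.Nodup ∧ (∀ g, g ∈ gs) ∧
      ∀ hs, SeqWitness hmn f gs hs → n * q ^ (n * q ^ n) ≤ hs.flatten.length := by
  classical
  obtain ⟨a, b, hab⟩ := Fintype.exists_pair_of_one_lt_card (by omega : 1 < Fintype.card A)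
  have hcard : 3 ≤ Fintype.card ((Fin n → A) → A) := by
    have : q ≤ q ^ n := Nat.le_self_pow (by omega) q
    rw [Fintype.card_fun, Fintype.card_fun, Fintype.card_fin, hA]
    calc 3 ≤ q ^ 2 := by nlinarith
      _ ≤ q ^ q ^ n := Nat.pow_le_pow_right (by omega) (by omega)
  obtain ⟨_ | ⟨v, l⟩, hnodup, hmem, hhead, hchain⟩ :=
    exists_enumeration_isChain_coordwiseNe hcard (fun _ => a) n
  · simp at hhead
  have hv : v = fun _ _ => a := Option.some_inj.1 hhead
  refine ⟨(v :: l).map Function.swap, hnodup.map Function.swap_bijective.injective,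
    fun g => List.mem_map_of_mem (hmem (Function.swap g)), fun hs hw => ?_⟩
  have hlen : ((v :: l).map Function.swap).length = q ^ (n * q ^ n) := by
    rw [List.length_map, ← Fintype.card_fin (v :: l).length,
      Fintype.card_congr (hnodup.getEquivOfForallMemList _ hmem)]
    simp [hA, ← pow_mul, mul_comm]
  have hchain' : ((v :: l).map Function.swap).IsChain
      fun g g' => CoordwiseNe (Function.swap g) (Function.swap g') :=
    List.isChain_map_of_isChain (Function.swap (φ := fun _ _ => A)) (fun _ _ h => h) hchain
  calc n * q ^ (n * q ^ n) = n * ((v :: l).map Function.swap).length := by rw [hlen]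
    _ ≤ hs.flatten.length := hw.mul_length_le_length_flatten <|
      List.isChain_cons_cons.2 ⟨fun _ => Function.ne_iff.2 ⟨fun _ => b, hv ▸ hab.symm⟩, hchain'⟩

/-- For every complete `n`-universal transformation `f` of `A^m`, the maximal sequential
time satisfies `st^max_f ≥ n·q^(n·q^n)`: some sequence listing all transformations of
`A^n` exactly once requires at least `n·q^(n·q^n)` instructions in every witness. -/
theorem complete_universal_max_seq_time_lower (q n m : ℕ) (hq : 2 ≤ q) (hn : 2 ≤ n)
    (hmn : n ≤ m) (A : Type*) [Fintype A] (hA : Fintype.card A = q)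
    (f : (Fin m → A) → Fin m → A)
    (hf : ∀ gs : List ((Fin n → A) → Fin n → A), ∃ hs, SeqWitness hmn f gs hs) :
    ∃ gs : List ((Fin n → A) → Fin n → A), gs.Nodup ∧ (∀ g, g ∈ gs) ∧
      ∀ hs, SeqWitness hmn f gs hs → n * q ^ (n * q ^ n) ≤ hs.flatten.length :=
  complete_universal_max_seq_time_lower_general q n m hq hn hmn A hA f
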